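/- Let G be a connected α-critical graph with at least 4 vertices, and let u be a vertex of G with exactly two neighbors v and w. Then the only common neighbor of v and w is u. -/

import Mathlib

open SimpleGraph

variable {V : Type*}

/-- The maximum size of an independent (stable) set of a simple graph. -/
noncomputable def alpha (G : SimpleGraph V) : ℕ :=
  sSup {n | ∃ s : Finset V, (∀ x ∈ s, ∀ y ∈ s, ¬ G.Adj x y) ∧ s.card = n}

/-- A graph is α-critical if deleting any edge increases α. -/
def AlphaCritical (G : SimpleGraph V) : Prop :=
  ∀ x y : V, G.Adj x y → alpha G < alpha (G.deleteEdges {s(x, y)})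

/-- `G` contains a totally odd K₄-subdivision: four distinct branch vertices joined by
six internally disjoint paths of odd length. -/
def HasTOK4 (G : SimpleGraph V) : Prop :=
  ∃ b : Fin 4 → V, Function.Injective b ∧
  ∃ P : ∀ i j : Fin 4, G.Walk (b i) (b j),
    (∀ i j, i ≠ j → (P i j).IsPath) ∧
    (∀ i j, i ≠ j → Odd (P i j).length) ∧
    (∀ i j k l : Fin 4, i ≠ j → k ≠ l → s(i, j) ≠ s(k, l) →
      ∀ v : V, v ∈ (P i j).support → v ∈ (P k l).support →
        (v = b i ∨ v = b j) ∧ (v = b k ∨ v = b l))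

/-- `G` is (isomorphic to) a totally odd K₄-subdivision: it has one that uses all
vertices and all edges of `G`. -/
def IsTOK4 (G : SimpleGraph V) : Prop :=
  ∃ b : Fin 4 → V, Function.Injective b ∧
  ∃ P : ∀ i j : Fin 4, G.Walk (b i) (b j),
    (∀ i j, i ≠ j → (P i j).IsPath) ∧
    (∀ i j, i ≠ j → Odd (P i j).length) ∧
    (∀ i j k l : Fin 4, i ≠ j → k ≠ l → s(i, j) ≠ s(k, l) →
      ∀ v : V, v ∈ (P i j).support → v ∈ (P k l).support →
        (v = b i ∨ v = b j) ∧ (v = b k ∨ v = b l)) ∧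
    (∀ v : V, ∃ i j, i ≠ j ∧ v ∈ (P i j).support) ∧
    (∀ e ∈ G.edgeSet, ∃ i j, i ≠ j ∧ e ∈ (P i j).edges)

/-- `G` is an odd cycle: a cycle of odd length passing through all vertices
and using all edges of `G`. -/
def IsOddCycle (G : SimpleGraph V) : Prop :=
  ∃ (v : V) (w : G.Walk v v), w.IsCycle ∧ Odd w.length ∧
    (∀ u : V, u ∈ w.support) ∧ (∀ e ∈ G.edgeSet, e ∈ w.edges)

/-- `G` is isomorphic to the complete graph on one vertex. -/
def IsK1 (G : SimpleGraph V) : Prop := Nonempty (G ≃g (⊤ : SimpleGraph (Fin 1)))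

/-- `G` is isomorphic to the complete graph on two vertices. -/
def IsK2 (G : SimpleGraph V) : Prop := Nonempty (G ≃g (⊤ : SimpleGraph (Fin 2)))

/-!
Suppose `x ≠ u` is a common neighbour of `v` and `w`. Criticality of the edge `vx` yields an
independent set `S` of `G - vx` with more than `α(G)` vertices, which must contain both `v`
and `x`; it avoids `u` (a neighbour of `v`) and `w` (a neighbour of `x`). Exchanging `v` for
`u` in `S` gives an independent set of `G` of the same size, which is impossible.
-/

open Finset

namespace SimpleGraph

variable {G : SimpleGraph V}

theorem forall_not_adj_iff_isIndepSet {s : Finset V} :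
    (∀ x ∈ s, ∀ y ∈ s, ¬ G.Adj x y) ↔ G.IsIndepSet s :=
  ⟨fun h _ hx _ hy _ => h _ hx _ hy, fun h _ hx _ hy hxy => h hx hy hxy.ne hxy⟩

theorem alpha_eq_indepNum (G : SimpleGraph V) : alpha G = G.indepNum := by
  simp only [alpha, indepNum, isNIndepSet_iff, forall_not_adj_iff_isIndepSet]

theorem IsIndepSet.sym2_eq_of_deleteEdges {e : Sym2 V} {s : Set V}
    (hs : (G.deleteEdges {e}).IsIndepSet s) {c d : V} (hc : c ∈ s) (hd : d ∈ s)
    (hcd : G.Adj c d) : s(c, d) = e := by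
  by_contra h
  exact hs hc hd hcd.ne ((deleteEdges_adj ..).2 ⟨hcd, h⟩)

theorem IsIndepSet.of_deleteEdges {a b : V} {s : Set V}
    (hs : (G.deleteEdges {s(a, b)}).IsIndepSet s) (ha : a ∉ s) : G.IsIndepSet s := by
  intro c hc d hd _ hcd
  have hmem : a ∈ s(c, d) := hs.sym2_eq_of_deleteEdges hc hd hcd ▸ Sym2.mem_mk_left a b
  rcases Sym2.mem_iff.1 hmem with rfl | rfl <;> contradiction

theorem IsIndepSet.insert_erase_of_deleteEdges [DecidableEq V] {a b u : V} {s : Finset V}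
    (hs : (G.deleteEdges {s(a, b)}).IsIndepSet s) (hu : ∀ y ∈ s, y ≠ a → ¬ G.Adj u y) :
    G.IsIndepSet ↑(insert u (s.erase a)) := by
  have herase : G.IsIndepSet ↑(s.erase a) :=
    IsIndepSet.of_deleteEdges (Set.Pairwise.mono (by simp) hs) (by simp)
  rw [coe_insert]
  refine Set.Pairwise.insert herase fun y hy _ => ?_
  obtain ⟨hya, hys⟩ := mem_erase.1 hy
  exact ⟨hu y hys hya, fun h => hu y hys hya h.symm⟩

theorem AlphaCritical.exists_isIndepSet_deleteEdges [Finite V] (hG : AlphaCritical G) {a b : V}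
    (hab : G.Adj a b) :
    ∃ s : Finset V, (G.deleteEdges {s(a, b)}).IsIndepSet s ∧ G.indepNum < #s ∧ a ∈ s ∧ b ∈ s := by
  obtain ⟨s, hs, hcard⟩ := (G.deleteEdges {s(a, b)}).exists_isNIndepSet_indepNum
  have hlt : G.indepNum < #s := by simpa only [hcard, alpha_eq_indepNum] using hG a b hab
  refine ⟨s, hs, hlt, ?_, ?_⟩ <;> by_contra h
  · exact (hs.of_deleteEdges h).card_le_indepNum.not_gt hlt
  · rw [Sym2.eq_swap] at hs
    exact (hs.of_deleteEdges h).card_le_indepNum.not_gt hlt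

end SimpleGraph

theorem stmt_3_general {V : Type*} [Fintype V] (G : SimpleGraph V)
    (hG : AlphaCritical G) (u v w : V) (hvw : v ≠ w)
    (hN : G.neighborSet u = {v, w}) :
    ∀ x : V, G.Adj v x → G.Adj w x → x = u := by
  classical
  intro x hvx hwx
  by_contra hxu
  have hadj_u : ∀ y, G.Adj u y ↔ y = v ∨ y = w := fun y => by rw [← mem_neighborSet, hN]; rfl
  obtain ⟨S, hS, hlt, hvS, hxS⟩ := hG.exists_isIndepSet_deleteEdges hvx
  have huS : u ∉ S := fun huS => by
    rcases Sym2.eq_iff.1 (hS.sym2_eq_of_deleteEdges huS hvS ((hadj_u v).2 (.inl rfl))) with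
      ⟨rfl, -⟩ | ⟨rfl, -⟩
    · exact G.irrefl ((hadj_u _).2 (.inl rfl))
    · exact hxu rfl
  have hwS : w ∉ S := fun hwS => by
    rcases Sym2.eq_iff.1 (hS.sym2_eq_of_deleteEdges hwS hxS hwx) with ⟨rfl, -⟩ | ⟨rfl, rfl⟩ <;>
      exact hvw rfl
  have hT := hS.insert_erase_of_deleteEdges (u := u) fun y hy hyv huy =>
    ((hadj_u y).1 huy).elim hyv (fun hyw => hwS (hyw ▸ hy))
  have hTcard := hT.card_le_indepNum
  rw [card_insert_of_notMem (by simp [huS]), card_erase_add_one hvS] at hTcard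
  omega

theorem stmt_3 {V : Type*} [Fintype V] (G : SimpleGraph V) (hconn : G.Connected)
    (hG : AlphaCritical G) (hcard : 4 ≤ Fintype.card V) (u v w : V) (hvw : v ≠ w)
    (hN : G.neighborSet u = {v, w}) :
    ∀ x : V, G.Adj v x → G.Adj w x → x = u :=
  stmt_3_general G hG u v w hvw hN
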